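/- Let ℓ_1, ..., ℓ_n : ℝ^d → ℝ be convex, G-Lipschitz, L-smooth, let μ > 0, let σ ∈ ℝⁿ be non-negative with Σσ_i = 1, and let ν ≥ 4nG²/μ. Define Φ(w, λ) := Σ_{i=1}^n λ_i ℓ_i(w) + (μ/2)‖w‖₂² − (ν/2)‖λ − u_n‖₂² on ℝ^d × P(σ), with unique saddle point (w*, λ*) (so w* = argmin_w max_{λ ∈ P(σ)} Φ(w, λ)). Fix w ∈ ℝ^d, set λ̄ := argmax_{λ ∈ P(σ)} Φ(w, λ) and w₊* := argmin_{w' ∈ ℝ^d} Φ(w', λ̄). If w₊ is a random vector satisfying E‖w₊ − w₊*‖₂ ≤ (1/5)‖w − w₊*‖₂, then E‖w₊ − w*‖₂ ≤ (1/2)‖w − w*‖₂. -/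

import Mathlib

open MeasureTheory ProbabilityTheory
open scoped NNReal ENNReal

/-- The permutahedron generated by `σ`, as a subset of Euclidean space: the image of `σ`
under all doubly stochastic matrices. -/
def permutahedronE {n : ℕ} (σ : Fin n → ℝ) : Set (EuclideanSpace ℝ (Fin n)) :=
  {lam | ∃ P : Matrix (Fin n) (Fin n) ℝ,
    (∀ i j, P i j ∈ Set.Icc (0 : ℝ) 1) ∧ (∀ i, ∑ j, P i j = 1) ∧ (∀ j, ∑ i, P i j = 1) ∧
    ∀ i, lam i = ∑ j, P i j * σ j}

/-- The saddle function `Φ(w, λ) = ∑ᵢ λᵢ ℓᵢ(w) + (μ/2)‖w‖² − (ν/2)‖λ − 𝟏/n‖²`. -/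
noncomputable def Phi {d n : ℕ} (ℓ : Fin n → EuclideanSpace ℝ (Fin d) → ℝ) (μ ν : ℝ)
    (w : EuclideanSpace ℝ (Fin d)) (lam : EuclideanSpace ℝ (Fin n)) : ℝ :=
  (∑ i, lam i * ℓ i w) + μ / 2 * ‖w‖ ^ 2 - ν / 2 * ∑ i, (lam i - 1 / n) ^ 2

/-!
Strong convexity of `Φ(·, λ)` and strong concavity of `Φ(w, ·)` give quadratic growth at the four
optimality conditions defining `w*`, `λ*`, `λ̄` and `w₊*`. Summing them in pairs, `Φ` cancels up to
the coupling `∑ᵢ (λ*ᵢ - λ̄ᵢ)(ℓᵢ(u) - ℓᵢ(v)) ≤ √n G ‖λ* - λ̄‖ ‖u - v‖`, which yields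
`μ ‖w₊* - w*‖ ≤ √n G ‖λ* - λ̄‖` and `ν ‖λ* - λ̄‖ ≤ √n G ‖w - w*‖`; hence
`‖w₊* - w*‖ ≤ (n G² / (μ ν)) ‖w - w*‖ ≤ ‖w - w*‖ / 4`. The triangle inequality in expectation then
gives `E‖w₊ - w*‖ ≤ (‖w - w*‖ + ‖w₊* - w*‖) / 5 + ‖w₊* - w*‖ ≤ ‖w - w*‖ / 2`.
-/

open Filter Topology

section UniformConvexity

variable {E : Type*} [NormedAddCommGroup E] [NormedSpace ℝ E] {s : Set E} {φ : ℝ → ℝ}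
  {f : E → ℝ} {x y : E}

theorem UniformConvexOn.add_le_of_isMinOn (hf : UniformConvexOn s φ f) (hx : x ∈ s)
    (hmin : IsMinOn f s x) (hy : y ∈ s) : f x + φ ‖x - y‖ ≤ f y := by
  have hsegment : ∀ t ∈ Set.Ioo (0 : ℝ) 1, f x + (1 - t) * φ ‖x - y‖ ≤ f y := by
    rintro t ⟨ht0, ht1⟩
    have hconv := hf.2 hx hy (sub_nonneg.2 ht1.le) ht0.le (sub_add_cancel 1 t)
    have hle : f x ≤ f ((1 - t) • x + t • y) :=
      hmin (hf.1 hx hy (sub_nonneg.2 ht1.le) ht0.le (sub_add_cancel 1 t))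
    rw [smul_eq_mul, smul_eq_mul] at hconv
    have : t * (f x + (1 - t) * φ ‖x - y‖) ≤ t * f y := by linarith
    exact le_of_mul_le_mul_left this ht0
  have hlim : Tendsto (fun t : ℝ => f x + (1 - t) * φ ‖x - y‖) (𝓝[>] 0)
      (𝓝 (f x + φ ‖x - y‖)) :=
    tendsto_nhdsWithin_of_tendsto_nhds <| (by fun_prop : Continuous fun t : ℝ =>
      f x + (1 - t) * φ ‖x - y‖).tendsto' 0 _ (by simp)
  exact le_of_tendsto hlim <| mem_of_superset (Ioo_mem_nhdsGT one_pos) hsegment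

theorem UniformConcaveOn.add_le_of_isMaxOn (hf : UniformConcaveOn s φ f) (hx : x ∈ s)
    (hmax : IsMaxOn f s x) (hy : y ∈ s) : f y + φ ‖x - y‖ ≤ f x := by
  have := hf.neg.add_le_of_isMinOn hx hmax.neg hy
  simp only [Pi.neg_apply] at this
  linarith

end UniformConvexity

theorem convexOn_sum {E ι : Type*} [AddCommGroup E] [Module ℝ E] {s : Set E} (hs : Convex ℝ s)
    (t : Finset ι) {f : ι → E → ℝ} (hf : ∀ i ∈ t, ConvexOn ℝ s (f i)) :
    ConvexOn ℝ s fun x => ∑ i ∈ t, f i x := by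
  classical
  induction t using Finset.induction_on with
  | empty => simpa using convexOn_const 0 hs
  | insert a t ha ih =>
    simp only [Finset.sum_insert ha]
    exact (hf a (Finset.mem_insert_self a t)).add
      (ih fun i hi => hf i (Finset.mem_insert_of_mem hi))

theorem convex_permutahedronE {n : ℕ} (σ : Fin n → ℝ) : Convex ℝ (permutahedronE σ) := by
  rintro x ⟨P, hP01, hProw, hPcol, hPx⟩ y ⟨Q, hQ01, hQrow, hQcol, hQy⟩ a b ha hb hab
  refine ⟨a • P + b • Q, fun i j => ?_, fun i => ?_, fun j => ?_, fun i => ?_⟩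
  · have hP := hP01 i j
    have hQ := hQ01 i j
    simp only [Matrix.add_apply, Matrix.smul_apply, smul_eq_mul, Set.mem_Icc] at hP hQ ⊢
    constructor <;> nlinarith
  · simp [Finset.sum_add_distrib, ← Finset.mul_sum, hProw, hQrow, hab]
  · simp [Finset.sum_add_distrib, ← Finset.mul_sum, hPcol, hQcol, hab]
  · simp [hPx, hQy, add_mul, mul_assoc, Finset.sum_add_distrib, Finset.mul_sum]

theorem nonneg_of_mem_permutahedronE {n : ℕ} {σ : Fin n → ℝ} (hσ : ∀ i, 0 ≤ σ i)
    {lam : EuclideanSpace ℝ (Fin n)} (h : lam ∈ permutahedronE σ) (i : Fin n) : 0 ≤ lam i := by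
  obtain ⟨P, hP01, -, -, hPlam⟩ := h
  rw [hPlam]
  exact Finset.sum_nonneg fun j _ => mul_nonneg (hP01 i j).1 (hσ j)

section Phi

variable {d n : ℕ} (ℓ : Fin n → EuclideanSpace ℝ (Fin d) → ℝ) (μ ν : ℝ)

theorem strongConvexOn_Phi_left (hconv : ∀ i, ConvexOn ℝ Set.univ (ℓ i))
    {lam : EuclideanSpace ℝ (Fin n)} (hlam : ∀ i, 0 ≤ lam i) :
    StrongConvexOn Set.univ μ fun w => Phi ℓ μ ν w lam := by
  rw [strongConvexOn_iff_convex]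
  have hlin : (fun w => Phi ℓ μ ν w lam - μ / 2 * ‖w‖ ^ 2) =
      fun w => ∑ i, lam i • ℓ i w + -(ν / 2 * ∑ i, (lam i - 1 / n) ^ 2) := by
    funext w
    simp only [Phi, smul_eq_mul]
    ring
  rw [hlin]
  exact (convexOn_sum convex_univ _ fun i _ => (hconv i).smul (hlam i)).add_const _

theorem strongConcaveOn_Phi_right (w : EuclideanSpace ℝ (Fin d))
    {Λ : Set (EuclideanSpace ℝ (Fin n))} (hΛ : Convex ℝ Λ) :
    StrongConcaveOn Λ ν fun lam => Phi ℓ μ ν w lam := by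
  rw [strongConcaveOn_iff_convex]
  have haffine : (fun lam => Phi ℓ μ ν w lam + ν / 2 * ‖lam‖ ^ 2) = fun lam =>
      innerₛₗ ℝ (WithLp.toLp 2 fun i => ℓ i w + ν / n) lam +
        (μ / 2 * ‖w‖ ^ 2 - ν / 2 * ∑ _i : Fin n, (1 / n : ℝ) ^ 2) := by
    funext lam
    simp only [Phi, innerₛₗ_apply_apply, PiLp.inner_apply, RCLike.inner_apply, conj_trivial,
      EuclideanSpace.real_norm_sq_eq]
    have hsq : ∀ i, (lam i - 1 / n) ^ 2 = lam i ^ 2 - 2 / n * lam i + (1 / n) ^ 2 := fun i => by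
      ring
    simp only [hsq, mul_add, Finset.sum_add_distrib, Finset.sum_sub_distrib, ← Finset.mul_sum,
      ← Finset.sum_mul]
    ring
  rw [haffine]
  exact ((innerₛₗ ℝ _).concaveOn hΛ).add_const _

theorem Phi_sub_add_Phi_sub (u v : EuclideanSpace ℝ (Fin d)) (p q : EuclideanSpace ℝ (Fin n)) :
    Phi ℓ μ ν u p - Phi ℓ μ ν v p + (Phi ℓ μ ν v q - Phi ℓ μ ν u q) =
      ∑ i, (p i - q i) * (ℓ i u - ℓ i v) := by
  simp only [Phi, sub_mul, mul_sub, Finset.sum_sub_distrib]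
  ring

end Phi

theorem sum_mul_sub_le_of_lipschitzWith {E ι : Type*} [SeminormedAddCommGroup E] [Fintype ι]
    {ℓ : ι → E → ℝ} {G : ℝ≥0} (hlip : ∀ i, LipschitzWith G (ℓ i))
    (p q : EuclideanSpace ℝ ι) (u v : E) :
    ∑ i, (p i - q i) * (ℓ i u - ℓ i v) ≤ √(Fintype.card ι) * G * ‖p - q‖ * ‖u - v‖ := by
  have hℓ : ∑ i, (ℓ i u - ℓ i v) ^ 2 ≤ ∑ _i : ι, (G * ‖u - v‖) ^ 2 := by
    refine Finset.sum_le_sum fun i _ => ?_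
    have h := (hlip i).dist_le_mul u v
    rw [Real.dist_eq, dist_eq_norm] at h
    exact sq_le_sq' (abs_le.mp h).1 (abs_le.mp h).2
  have hpq : ∑ i, (p i - q i) ^ 2 = ‖p - q‖ ^ 2 := by
    simp [EuclideanSpace.real_norm_sq_eq]
  calc ∑ i, (p i - q i) * (ℓ i u - ℓ i v)
      ≤ √(∑ i, (p i - q i) ^ 2) * √(∑ i, (ℓ i u - ℓ i v) ^ 2) :=
        Real.sum_mul_le_sqrt_mul_sqrt _ _ _
    _ ≤ ‖p - q‖ * √(∑ _i : ι, (G * ‖u - v‖) ^ 2) := by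
        rw [hpq, Real.sqrt_sq (norm_nonneg _)]
        gcongr
    _ = √(Fintype.card ι) * G * ‖p - q‖ * ‖u - v‖ := by
        rw [Finset.sum_const, Finset.card_univ, nsmul_eq_mul, Real.sqrt_mul (Nat.cast_nonneg _),
          Real.sqrt_sq (by positivity)]
        ring

theorem four_mul_le_of_coupled_sq_le {a b c s μ ν : ℝ} (ha : 0 ≤ a) (hb : 0 ≤ b) (hc : 0 ≤ c)
    (hμ : 0 < μ) (hsμν : 4 * s ^ 2 ≤ μ * ν)
    (hA : μ * a ^ 2 ≤ s * b * a) (hB : ν * b ^ 2 ≤ s * b * c) : 4 * a ≤ c := by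
  rcases ha.eq_or_lt with rfl | ha_pos
  · linarith
  have hμa : μ * a ≤ s * b := le_of_mul_le_mul_right (by linarith) ha_pos
  have hsb : 0 < s * b := (mul_pos hμ ha_pos).trans_le hμa
  have hb_pos : 0 < b := hb.lt_of_ne (by rintro rfl; simp at hsb)
  have hs : 0 < s := pos_of_mul_pos_left hsb hb
  have hνb : ν * b ≤ s * c := le_of_mul_le_mul_right (by linarith) hb_pos
  have hν : 0 < ν := pos_of_mul_pos_right ((by positivity : 0 < 4 * s ^ 2).trans_le hsμν) hμ.le
  refine le_of_mul_le_mul_left ?_ (mul_pos hμ hν)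
  calc μ * ν * (4 * a) = 4 * ν * (μ * a) := by ring
    _ ≤ 4 * ν * (s * b) := by gcongr
    _ = 4 * s * (ν * b) := by ring
    _ ≤ 4 * s * (s * c) := by gcongr
    _ = 4 * s ^ 2 * c := by ring
    _ ≤ μ * ν * c := by gcongr

theorem four_mul_norm_sub_le_of_best_responses {d n : ℕ}
    {ℓ : Fin n → EuclideanSpace ℝ (Fin d) → ℝ} (hconv : ∀ i, ConvexOn ℝ Set.univ (ℓ i))
    {G : ℝ≥0} (hlip : ∀ i, LipschitzWith G (ℓ i)) {μ ν : ℝ} (hμ : 0 < μ)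
    (hν : 4 * n * (G : ℝ) ^ 2 / μ ≤ ν) {Λ : Set (EuclideanSpace ℝ (Fin n))} (hΛ : Convex ℝ Λ)
    (hΛ_nonneg : ∀ lam ∈ Λ, ∀ i, 0 ≤ lam i)
    {wstar : EuclideanSpace ℝ (Fin d)} {lamstar : EuclideanSpace ℝ (Fin n)}
    (hlamstar_mem : lamstar ∈ Λ)
    (hwstar : IsMinOn (fun w' => Phi ℓ μ ν w' lamstar) Set.univ wstar)
    (hlamstar : IsMaxOn (fun lam' => Phi ℓ μ ν wstar lam') Λ lamstar)
    {w : EuclideanSpace ℝ (Fin d)} {lambar : EuclideanSpace ℝ (Fin n)}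
    (hlambar_mem : lambar ∈ Λ)
    (hlambar : IsMaxOn (fun lam' => Phi ℓ μ ν w lam') Λ lambar)
    {wps : EuclideanSpace ℝ (Fin d)}
    (hwps : IsMinOn (fun w' => Phi ℓ μ ν w' lambar) Set.univ wps) :
    4 * ‖wps - wstar‖ ≤ ‖w - wstar‖ := by
  have hA₁ := (strongConvexOn_Phi_left ℓ μ ν hconv (hΛ_nonneg _ hlamstar_mem)).add_le_of_isMinOn
    (Set.mem_univ _) hwstar (Set.mem_univ wps)
  have hA₂ := (strongConvexOn_Phi_left ℓ μ ν hconv (hΛ_nonneg _ hlambar_mem)).add_le_of_isMinOn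
    (Set.mem_univ _) hwps (Set.mem_univ wstar)
  have hB₁ := (strongConcaveOn_Phi_right ℓ μ ν wstar hΛ).add_le_of_isMaxOn hlamstar_mem hlamstar
    hlambar_mem
  have hB₂ := (strongConcaveOn_Phi_right ℓ μ ν w hΛ).add_le_of_isMaxOn hlambar_mem hlambar
    hlamstar_mem
  have hcross₁ := sum_mul_sub_le_of_lipschitzWith hlip lamstar lambar wps wstar
  have hcross₂ := sum_mul_sub_le_of_lipschitzWith hlip lamstar lambar wstar w
  have hpair₁ := Phi_sub_add_Phi_sub ℓ μ ν wps wstar lamstar lambar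
  have hpair₂ := Phi_sub_add_Phi_sub ℓ μ ν wstar w lamstar lambar
  rw [Fintype.card_fin] at hcross₁ hcross₂
  rw [norm_sub_rev wstar wps] at hA₁
  rw [norm_sub_rev lambar lamstar] at hB₂
  rw [norm_sub_rev wstar w] at hcross₂
  have hsμν : 4 * (√n * G) ^ 2 ≤ μ * ν := by
    rw [mul_pow, Real.sq_sqrt n.cast_nonneg, mul_comm μ, ← mul_assoc]
    exact (div_le_iff₀ hμ).mp hν
  refine four_mul_le_of_coupled_sq_le (norm_nonneg _) (norm_nonneg (lamstar - lambar))
    (norm_nonneg _) hμ hsμν ?_ ?_ <;> linarith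

theorem lintegral_ofReal_norm_sub_le_add {Ω E : Type*} [MeasurableSpace Ω]
    [SeminormedAddCommGroup E] (P : Measure Ω) [IsProbabilityMeasure P] (X : Ω → E) (a b : E) :
    ∫⁻ ω, ENNReal.ofReal ‖X ω - b‖ ∂P ≤
      ∫⁻ ω, ENNReal.ofReal ‖X ω - a‖ ∂P + ENNReal.ofReal ‖a - b‖ := by
  calc ∫⁻ ω, ENNReal.ofReal ‖X ω - b‖ ∂P
      ≤ ∫⁻ ω, (ENNReal.ofReal ‖X ω - a‖ + ENNReal.ofReal ‖a - b‖) ∂P := by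
        refine lintegral_mono fun ω => ?_
        rw [← ENNReal.ofReal_add (norm_nonneg _) (norm_nonneg _)]
        exact ENNReal.ofReal_le_ofReal (norm_sub_le_norm_sub_add_norm_sub _ _ _)
    _ = ∫⁻ ω, ENNReal.ofReal ‖X ω - a‖ ∂P + ENNReal.ofReal ‖a - b‖ := by
        rw [lintegral_add_right _ measurable_const, lintegral_const, measure_univ, mul_one]

theorem stmt19_general {d n : ℕ}
    {Ωs : Type*} [MeasureSpace Ωs] [IsProbabilityMeasure (ℙ : Measure Ωs)]
    (ℓ : Fin n → EuclideanSpace ℝ (Fin d) → ℝ)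
    (hconv : ∀ i, ConvexOn ℝ Set.univ (ℓ i))
    (G : ℝ≥0) (hlip : ∀ i, LipschitzWith G (ℓ i))
    (μ : ℝ) (hμ : 0 < μ)
    (σ : Fin n → ℝ) (hσ_nonneg : ∀ i, 0 ≤ σ i)
    (ν : ℝ) (hν : 4 * n * (G : ℝ) ^ 2 / μ ≤ ν)
    -- the saddle point (w*, λ*)
    (wstar : EuclideanSpace ℝ (Fin d)) (lamstar : EuclideanSpace ℝ (Fin n))
    (hlamstar_mem : lamstar ∈ permutahedronE σ)
    (hwstar : IsMinOn (fun w' => Phi ℓ μ ν w' lamstar) Set.univ wstar)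
    (hlamstar : IsMaxOn (fun lam' => Phi ℓ μ ν wstar lam') (permutahedronE σ) lamstar)
    -- the current point, the exact dual and primal updates
    (w : EuclideanSpace ℝ (Fin d))
    (lambar : EuclideanSpace ℝ (Fin n)) (hlambar_mem : lambar ∈ permutahedronE σ)
    (hlambar : IsMaxOn (fun lam' => Phi ℓ μ ν w lam') (permutahedronE σ) lambar)
    (wps : EuclideanSpace ℝ (Fin d))
    (hwps : IsMinOn (fun w' => Phi ℓ μ ν w' lambar) Set.univ wps)
    -- the random inexact primal update
    (wplus : Ωs → EuclideanSpace ℝ (Fin d))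
    (hcontract : ∫⁻ ω, ENNReal.ofReal ‖wplus ω - wps‖ ∂ℙ ≤
      ENNReal.ofReal (1 / 5 * ‖w - wps‖)) :
    ∫⁻ ω, ENNReal.ofReal ‖wplus ω - wstar‖ ∂ℙ ≤
      ENNReal.ofReal (1 / 2 * ‖w - wstar‖) := by
  have hexact : 4 * ‖wps - wstar‖ ≤ ‖w - wstar‖ :=
    four_mul_norm_sub_le_of_best_responses hconv hlip hμ hν (convex_permutahedronE σ)
      (fun _ h => nonneg_of_mem_permutahedronE hσ_nonneg h) hlamstar_mem hwstar hlamstar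
      hlambar_mem hlambar hwps
  have htriangle : ‖w - wps‖ ≤ ‖w - wstar‖ + ‖wps - wstar‖ := by
    simpa only [norm_sub_rev wstar wps] using norm_sub_le_norm_sub_add_norm_sub w wstar wps
  calc ∫⁻ ω, ENNReal.ofReal ‖wplus ω - wstar‖ ∂ℙ
      ≤ ∫⁻ ω, ENNReal.ofReal ‖wplus ω - wps‖ ∂ℙ + ENNReal.ofReal ‖wps - wstar‖ :=
        lintegral_ofReal_norm_sub_le_add ℙ wplus wps wstar
    _ ≤ ENNReal.ofReal (1 / 5 * ‖w - wps‖) + ENNReal.ofReal ‖wps - wstar‖ := by gcongr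
    _ = ENNReal.ofReal (1 / 5 * ‖w - wps‖ + ‖wps - wstar‖) :=
        (ENNReal.ofReal_add (by positivity) (norm_nonneg _)).symm
    _ ≤ ENNReal.ofReal (1 / 2 * ‖w - wstar‖) := ENNReal.ofReal_le_ofReal (by linarith)

/-- One-step contraction of the inexact alternating scheme for the smoothed
saddle problem: if `ν ≥ 4nG²/μ`, `(w*, λ*)` is the saddle point of `Φ`, `λ̄` maximizes
`Φ(w, ·)` over `P(σ)`, `w₊*` minimizes `Φ(·, λ̄)`, and the random iterate `w₊` satisfies
`E‖w₊ − w₊*‖ ≤ (1/5)‖w − w₊*‖`, then `E‖w₊ − w*‖ ≤ (1/2)‖w − w*‖`. -/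
theorem stmt19 {d n : ℕ}
    {Ωs : Type*} [MeasureSpace Ωs] [IsProbabilityMeasure (ℙ : Measure Ωs)]
    (ℓ : Fin n → EuclideanSpace ℝ (Fin d) → ℝ)
    (hconv : ∀ i, ConvexOn ℝ Set.univ (ℓ i))
    (G : ℝ≥0) (hlip : ∀ i, LipschitzWith G (ℓ i))
    (gradℓ : Fin n → EuclideanSpace ℝ (Fin d) → EuclideanSpace ℝ (Fin d))
    (hgrad : ∀ i w, HasGradientAt (ℓ i) (gradℓ i w) w)
    (L : ℝ≥0) (hsmooth : ∀ i, LipschitzWith L (gradℓ i))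
    (μ : ℝ) (hμ : 0 < μ)
    (σ : Fin n → ℝ) (hσ_nonneg : ∀ i, 0 ≤ σ i) (hσ_sum : ∑ i, σ i = 1)
    (ν : ℝ) (hν : 4 * n * (G : ℝ) ^ 2 / μ ≤ ν)
    -- the saddle point (w*, λ*)
    (wstar : EuclideanSpace ℝ (Fin d)) (lamstar : EuclideanSpace ℝ (Fin n))
    (hlamstar_mem : lamstar ∈ permutahedronE σ)
    (hwstar : IsMinOn (fun w' => Phi ℓ μ ν w' lamstar) Set.univ wstar)
    (hlamstar : IsMaxOn (fun lam' => Phi ℓ μ ν wstar lam') (permutahedronE σ) lamstar)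
    -- the current point, the exact dual and primal updates
    (w : EuclideanSpace ℝ (Fin d))
    (lambar : EuclideanSpace ℝ (Fin n)) (hlambar_mem : lambar ∈ permutahedronE σ)
    (hlambar : IsMaxOn (fun lam' => Phi ℓ μ ν w lam') (permutahedronE σ) lambar)
    (wps : EuclideanSpace ℝ (Fin d))
    (hwps : IsMinOn (fun w' => Phi ℓ μ ν w' lambar) Set.univ wps)
    -- the random inexact primal update
    (wplus : Ωs → EuclideanSpace ℝ (Fin d)) (hwplus : Measurable wplus)
    (hcontract : ∫⁻ ω, ENNReal.ofReal ‖wplus ω - wps‖ ∂ℙ ≤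
      ENNReal.ofReal (1 / 5 * ‖w - wps‖)) :
    ∫⁻ ω, ENNReal.ofReal ‖wplus ω - wstar‖ ∂ℙ ≤
      ENNReal.ofReal (1 / 2 * ‖w - wstar‖) :=
  stmt19_general ℓ hconv G hlip μ hμ σ hσ_nonneg ν hν wstar lamstar hlamstar_mem hwstar hlamstar w
    lambar hlambar_mem hlambar wps hwps wplus hcontract
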